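/- arXiv:2103.05089 — 2 statements merged into one kernel-verified Lean document; each statement's English description precedes it below -/
import Mathlib

section
/- Let w : ℂ → ℂ be the Faddeeva function w(z) = e^{−z²}·erfc(−iz), which satisfies the closed form w(z) = e^{−z²} + (2iz/√π)·e^{−z²}·∫₀¹ e^{s²z²} ds. Then there exist constants C > 0 and R > 0 such that for every z ∈ ℂ with |z| ≥ R that can be written z = |z|·e^{iθ} with −π/8 < θ < 9π/8, one has |w(z)| ≤ C/|z|. -/
/-!
For `Im z > 0` the closed form equals `(2/√π) ∫₀^∞ e^{-u² + 2iuz} du`, whose modulus is at most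
`(2/√π) ∫₀^∞ e^{-2u Im z} du = 1/(√π Im z)`. For `Re z² > 0` the closed form is bounded directly:
`|e^{-z²} ∫₀¹ e^{s²z²} ds| ≤ ∫₀¹ e^{-(1-s²) Re z²} ds ≤ 1/Re z²`. On the sector
`-π/8 < arg z < 9π/8` one has `Im z > -|z|/2`, so either `Im z ≥ |z|/2` or `Re z² ≥ |z|²/2`,
and both bounds are `O(1/|z|)`.
-/

open MeasureTheory Filter Set Complex Real Topology

/-- `∫_{-iz}^∞ e^{-t²} dt = (√π/2) erfc(-iz)`. -/
noncomputable def gaussianTail (z : ℂ) : ℂ := ∫ u in Ioi (0 : ℝ), cexp (-(u - I * z) ^ 2)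

lemma norm_cexp_neg_sq_sub_I_mul (z : ℂ) (u : ℝ) :
    ‖cexp (-(u - I * z) ^ 2)‖ = rexp (z.re ^ 2 - (u + z.im) ^ 2) := by
  rw [norm_exp]
  congr 1
  simp only [sq, neg_re, mul_re, mul_im, sub_re, sub_im, ofReal_re, ofReal_im, I_re, I_im]
  ring

lemma integrable_cexp_neg_sq_sub_I_mul (z : ℂ) :
    Integrable (fun u : ℝ ↦ cexp (-(u - I * z) ^ 2)) := by
  convert integrable_cexp_quadratic (b := 1) (by simp) (2 * I * z) (z ^ 2) using 3 with u
  linear_combination (-z ^ 2) * I_sq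

lemma hasDerivAt_cexp_neg_sq_sub_I_mul (u : ℝ) (z : ℂ) :
    HasDerivAt (fun x ↦ cexp (-(u - I * x) ^ 2))
      (2 * I * (u - I * z) * cexp (-(u - I * z) ^ 2)) z := by
  have h := (((hasDerivAt_id' z).const_mul I).const_sub (u : ℂ)).fun_pow 2 |>.fun_neg.cexp
  refine h.congr_deriv ?_
  ring

lemma hasDerivAt_neg_I_mul_cexp_neg_sq_sub_I_mul (z : ℂ) (u : ℝ) :
    HasDerivAt (fun u : ℝ ↦ -I * cexp (-(u - I * z) ^ 2))
      (2 * I * (u - I * z) * cexp (-(u - I * z) ^ 2)) u := by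
  have h := ((((hasDerivAt_id' (u : ℂ)).sub_const (I * z)).fun_pow 2 |>.fun_neg.cexp).const_mul
    (-I)).comp_ofReal
  refine h.congr_deriv ?_
  ring

lemma norm_deriv_cexp_neg_sq_sub_I_mul_le {M : ℝ} {x : ℂ} (hx : ‖x‖ ≤ M) {u : ℝ} (hu : 0 ≤ u) :
    ‖2 * I * (u - I * x) * cexp (-(u - I * x) ^ 2)‖ ≤
      2 * (u + M) * rexp (2 * M ^ 2 - (u - M) ^ 2) := by
  have hre : |x.re| ≤ M := (abs_re_le_norm x).trans hx
  have him : |x.im| ≤ M := (abs_im_le_norm x).trans hx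
  have hlin : ‖(u : ℂ) - I * x‖ ≤ u + M := by
    calc ‖(u : ℂ) - I * x‖ ≤ ‖(u : ℂ)‖ + ‖I * x‖ := norm_sub_le _ _
      _ ≤ u + M := by simp [abs_of_nonneg hu, hx]
  have hexp : x.re ^ 2 - (u + x.im) ^ 2 ≤ 2 * M ^ 2 - (u - M) ^ 2 := by
    have hre2 : x.re ^ 2 ≤ M ^ 2 := sq_le_sq' (abs_le.mp hre).1 (abs_le.mp hre).2
    nlinarith [mul_nonneg hu (by linarith [(abs_le.mp him).1] : 0 ≤ M + x.im), sq_nonneg x.im]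
  rw [norm_mul, norm_mul, norm_cexp_neg_sq_sub_I_mul]
  simp only [norm_mul, norm_I, mul_one, Complex.norm_ofNat]
  gcongr
  linarith [norm_nonneg x]

lemma integrable_deriv_cexp_neg_sq_sub_I_mul_bound (M : ℝ) :
    Integrable (fun u : ℝ ↦ 2 * (u + M) * rexp (2 * M ^ 2 - (u - M) ^ 2)) := by
  have h := (((integrable_mul_exp_neg_mul_sq one_pos).add
    ((integrable_exp_neg_mul_sq one_pos).const_mul (2 * M))).comp_sub_right M).const_mul
      (2 * rexp (2 * M ^ 2))
  convert h using 2 with u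
  simp only [Pi.add_apply]
  rw [sub_eq_add_neg (2 * M ^ 2), Real.exp_add]
  ring_nf

lemma integrableOn_deriv_cexp_neg_sq_sub_I_mul (z : ℂ) :
    IntegrableOn (fun u : ℝ ↦ 2 * I * (u - I * z) * cexp (-(u - I * z) ^ 2)) (Ioi 0) := by
  refine (integrable_deriv_cexp_neg_sq_sub_I_mul_bound ‖z‖).integrableOn.mono' (by fun_prop) ?_
  filter_upwards [self_mem_ae_restrict measurableSet_Ioi] with u hu
  exact norm_deriv_cexp_neg_sq_sub_I_mul_le le_rfl (le_of_lt hu)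

lemma tendsto_cexp_neg_sq_sub_I_mul_atTop (z : ℂ) :
    Tendsto (fun u : ℝ ↦ cexp (-(u - I * z) ^ 2)) atTop (𝓝 0) := by
  rw [tendsto_zero_iff_norm_tendsto_zero]
  simp only [norm_cexp_neg_sq_sub_I_mul]
  refine Real.tendsto_exp_atBot.comp (tendsto_atBot_add_const_left _ _ ?_)
  exact tendsto_neg_atTop_atBot.comp
    ((tendsto_pow_atTop two_ne_zero).comp (tendsto_atTop_add_const_right _ _ tendsto_id))

-- `∂_z e^{-(u-iz)²} = -i ∂_u e^{-(u-iz)²}`, so the `z`-derivative integrates by FTC.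
lemma integral_deriv_cexp_neg_sq_sub_I_mul (z : ℂ) :
    ∫ u in Ioi (0 : ℝ), 2 * I * (u - I * z) * cexp (-(u - I * z) ^ 2) = I * cexp (z ^ 2) := by
  rw [integral_Ioi_of_hasDerivAt_of_tendsto'
    (fun u _ ↦ hasDerivAt_neg_I_mul_cexp_neg_sq_sub_I_mul z u)
    (integrableOn_deriv_cexp_neg_sq_sub_I_mul z)
    (by simpa using (tendsto_cexp_neg_sq_sub_I_mul_atTop z).const_mul (-I))]
  simp only [ofReal_zero, zero_sub, neg_sq, mul_pow, I_sq]
  ring_nf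

lemma hasDerivAt_gaussianTail (z : ℂ) : HasDerivAt gaussianTail (I * cexp (z ^ 2)) z := by
  rw [← integral_deriv_cexp_neg_sq_sub_I_mul]
  refine (hasDerivAt_integral_of_dominated_loc_of_deriv_le (μ := volume.restrict (Ioi 0))
    (F := fun (x : ℂ) (u : ℝ) ↦ cexp (-(u - I * x) ^ 2)) (s := Metric.ball 0 (‖z‖ + 1))
    (Metric.isOpen_ball.mem_nhds (by simp)) (Eventually.of_forall fun x ↦ by fun_prop)
    (integrable_cexp_neg_sq_sub_I_mul z).integrableOn (by fun_prop) ?_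
    (integrable_deriv_cexp_neg_sq_sub_I_mul_bound (‖z‖ + 1)).integrableOn
    (Eventually.of_forall fun u x _ ↦ hasDerivAt_cexp_neg_sq_sub_I_mul u x)).2
  filter_upwards [self_mem_ae_restrict measurableSet_Ioi] with u hu x hx
  exact norm_deriv_cexp_neg_sq_sub_I_mul_le (mem_ball_zero_iff.mp hx).le (le_of_lt hu)

lemma gaussianTail_zero : gaussianTail 0 = √π / 2 := by
  have h := integral_gaussian_Ioi 1
  simp only [neg_mul, one_mul, div_one] at h
  simp only [gaussianTail, mul_zero, sub_zero, ← ofReal_pow, ← ofReal_neg, ← ofReal_exp,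
    integral_complex_ofReal, h, ofReal_div, ofReal_ofNat]

/-- Both sides have derivative `i e^{z²}` (the right side is `√π/2 + i ∫₀^z e^{t²} dt`); along
the ray `t ↦ t z` this becomes a real ODE with equal initial values. -/
theorem gaussianTail_eq (z : ℂ) :
    gaussianTail z = √π / 2 + I * z * ∫ s in (0 : ℝ)..1, cexp ((s : ℂ) ^ 2 * z ^ 2) := by
  set φ : ℝ → ℂ := fun t ↦
    gaussianTail (t * z) - I * z * ∫ s in (0 : ℝ)..t, cexp ((s : ℂ) ^ 2 * z ^ 2) with hφ
  have hderiv (t : ℝ) : HasDerivAt φ 0 t := by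
    have hG := ((hasDerivAt_gaussianTail (t * z)).comp (t : ℂ)
      ((hasDerivAt_id' (t : ℂ)).mul_const z)).comp_ofReal
    have hJ := ((show Continuous fun s : ℝ ↦ cexp ((s : ℂ) ^ 2 * z ^ 2) by fun_prop)
      |>.integral_hasStrictDerivAt 0 t).hasDerivAt.const_mul (I * z)
    refine (hG.sub hJ).congr_deriv ?_
    ring_nf
  have := is_const_of_deriv_eq_zero (fun t ↦ (hderiv t).differentiableAt)
    (fun t ↦ (hderiv t).deriv) 1 0
  simpa [hφ, gaussianTail_zero, sub_eq_iff_eq_add] using this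

lemma integral_exp_mul_sub_one_le {a : ℝ} (ha : 0 < a) :
    ∫ s in (0 : ℝ)..1, rexp ((s - 1) * a) ≤ 1 / a := by
  have h : ∫ s in (0 : ℝ)..1, rexp ((s - 1) * a) = (1 - rexp (-a)) / a := by
    simp_rw [sub_mul, one_mul, Real.exp_sub]
    rw [intervalIntegral.integral_div, intervalIntegral.integral_comp_mul_right _ ha.ne',
      integral_exp, Real.exp_neg]
    simp only [smul_eq_mul]
    field_simp
    simp
  rw [h]
  gcongr
  linarith [Real.exp_pos (-a)]

lemma norm_cexp_neg_sq_mul_integral_le {z : ℂ} (ha : 0 < (z ^ 2).re) :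
    ‖cexp (-z ^ 2) * ∫ s in (0 : ℝ)..1, cexp ((s : ℂ) ^ 2 * z ^ 2)‖ ≤ 1 / (z ^ 2).re := by
  rw [← intervalIntegral.integral_const_mul]
  have hbound : IntervalIntegrable (fun s : ℝ ↦ rexp ((s - 1) * (z ^ 2).re)) volume 0 1 := by
    apply Continuous.intervalIntegrable
    fun_prop
  refine (intervalIntegral.norm_integral_le_of_norm_le zero_le_one ?_ hbound).trans
    (integral_exp_mul_sub_one_le ha)
  refine Eventually.of_forall fun s ⟨hs₀, hs₁⟩ ↦ ?_
  rw [← Complex.exp_add, norm_exp]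
  gcongr
  have : ((s : ℂ) ^ 2 * z ^ 2).re = s ^ 2 * (z ^ 2).re := by
    rw [← ofReal_pow, re_ofReal_mul]
  rw [add_re, neg_re, this]
  nlinarith [mul_nonneg (mul_nonneg hs₀.le (sub_nonneg.2 hs₁)) ha.le]

lemma norm_cexp_neg_sq_mul_gaussianTail_le {z : ℂ} (hy : 0 < z.im) :
    ‖cexp (-z ^ 2) * gaussianTail z‖ ≤ 1 / (2 * z.im) := by
  rw [gaussianTail, ← integral_const_mul]
  have hint : IntegrableOn (fun u : ℝ ↦ rexp (-(2 * z.im) * u)) (Ioi 0) :=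
    exp_neg_integrableOn_Ioi 0 (by positivity)
  refine (norm_integral_le_of_norm_le hint ?_).trans_eq ?_
  · filter_upwards [self_mem_ae_restrict measurableSet_Ioi] with u hu
    rw [norm_mul, norm_exp, norm_cexp_neg_sq_sub_I_mul, ← Real.exp_add]
    gcongr
    simp only [neg_re, sq, mul_re]
    nlinarith [sq_nonneg u]
  · rw [integral_exp_mul_Ioi (by linarith) 0]
    field_simp
    simp

noncomputable def faddeeva (z : ℂ) : ℂ :=
  cexp (-z ^ 2) + (2 * I * z / (√π : ℂ)) * cexp (-z ^ 2) *
    ∫ s in (0 : ℝ)..1, cexp ((s : ℂ) ^ 2 * z ^ 2)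

lemma faddeeva_eq_gaussianTail (z : ℂ) :
    faddeeva z = 2 / √π * (cexp (-z ^ 2) * gaussianTail z) := by
  have hπ : (√π : ℂ) ≠ 0 := ofReal_ne_zero.mpr (Real.sqrt_pos.mpr Real.pi_pos).ne'
  rw [faddeeva, gaussianTail_eq]
  field_simp

lemma norm_faddeeva_le_of_im_pos {z : ℂ} (hy : 0 < z.im) :
    ‖faddeeva z‖ ≤ 1 / (√π * z.im) := by
  have hπ : 0 < √π := Real.sqrt_pos.mpr Real.pi_pos
  rw [faddeeva_eq_gaussianTail, norm_mul]
  calc ‖(2 : ℂ) / √π‖ * ‖cexp (-z ^ 2) * gaussianTail z‖ ≤ 2 / √π * (1 / (2 * z.im)) := by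
        gcongr
        · simp [abs_of_pos hπ]
        · exact norm_cexp_neg_sq_mul_gaussianTail_le hy
    _ = 1 / (√π * z.im) := by field_simp

lemma norm_faddeeva_le_of_re_sq_pos {z : ℂ} (ha : 0 < (z ^ 2).re) :
    ‖faddeeva z‖ ≤ (1 + 2 * ‖z‖ / √π) / (z ^ 2).re := by
  have hπ : 0 < √π := Real.sqrt_pos.mpr Real.pi_pos
  have hexp : ‖cexp (-z ^ 2)‖ ≤ 1 / (z ^ 2).re := by
    rw [norm_exp, neg_re, Real.exp_neg, one_div]
    exact inv_anti₀ ha (by linarith [Real.add_one_le_exp (z ^ 2).re])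
  calc ‖faddeeva z‖ ≤ ‖cexp (-z ^ 2)‖ + ‖2 * I * z / (√π : ℂ)‖ *
        ‖cexp (-z ^ 2) * ∫ s in (0 : ℝ)..1, cexp ((s : ℂ) ^ 2 * z ^ 2)‖ := by
        rw [faddeeva, mul_assoc, ← norm_mul]
        exact norm_add_le _ _
    _ ≤ 1 / (z ^ 2).re + 2 * ‖z‖ / √π * (1 / (z ^ 2).re) := by
        gcongr
        · simp [abs_of_pos hπ]
        · exact norm_cexp_neg_sq_mul_integral_le ha
    _ = (1 + 2 * ‖z‖ / √π) / (z ^ 2).re := by ring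

lemma neg_half_lt_sin {θ : ℝ} (h₁ : -(π / 6) < θ) (h₂ : θ < 7 * π / 6) :
    -(1 / 2) < Real.sin θ := by
  have hπ := Real.pi_pos
  have hsin : Real.sin (-(π / 6)) = -(1 / 2) := by rw [Real.sin_neg, Real.sin_pi_div_six]
  rw [← hsin]
  rcases le_or_gt θ (π / 2) with h | h
  · exact Real.strictMonoOn_sin ⟨by linarith, by linarith⟩ ⟨by linarith, h⟩ h₁
  · rw [← Real.sin_pi_sub θ]
    exact Real.strictMonoOn_sin ⟨by linarith, by linarith⟩ ⟨by linarith, by linarith⟩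
      (by linarith)

lemma im_eq_norm_mul_sin {z : ℂ} {θ : ℝ} (hz : z = ‖z‖ * cexp (I * θ)) :
    z.im = ‖z‖ * Real.sin θ := by
  nth_rewrite 1 [hz]
  rw [mul_comm I, im_ofReal_mul, exp_ofReal_mul_I_im]

lemma norm_sq_div_two_le_re_sq {z : ℂ} (h : |z.im| ≤ ‖z‖ / 2) : ‖z‖ ^ 2 / 2 ≤ (z ^ 2).re := by
  have him : z.im ^ 2 ≤ ‖z‖ ^ 2 / 4 := by nlinarith [sq_abs z.im, abs_nonneg z.im]
  have hnorm : ‖z‖ ^ 2 = z.re ^ 2 + z.im ^ 2 := by rw [Complex.sq_norm, normSq_apply]; ring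
  have hre : (z ^ 2).re = z.re ^ 2 - z.im ^ 2 := by rw [sq, mul_re]; ring
  linarith

/-- Decay estimate `|w(z)| ≤ C/|z|` for the Faddeeva function
`w(z) = e^{−z²} erfc(−iz) = e^{−z²} + (2iz/√π) e^{−z²} ∫₀¹ e^{s²z²} ds`
on the sector `−π/8 < arg z < 9π/8`, for `|z|` large. -/
theorem faddeeva_sector_decay
    (w : ℂ → ℂ)
    (hw : ∀ z : ℂ, w z =
      Complex.exp (-z ^ 2) +
        (2 * Complex.I * z / (Real.sqrt Real.pi : ℂ)) * Complex.exp (-z ^ 2) *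
          ∫ s in (0:ℝ)..1, Complex.exp ((s : ℂ) ^ 2 * z ^ 2)) :
    ∃ C > 0, ∃ R > 0, ∀ z : ℂ, R ≤ ‖z‖ →
      (∃ θ : ℝ, -Real.pi / 8 < θ ∧ θ < 9 * Real.pi / 8 ∧
        z = (‖z‖ : ℂ) * Complex.exp (Complex.I * (θ : ℂ))) →
      ‖w z‖ ≤ C / ‖z‖ := by
  refine ⟨6, by norm_num, 1, one_pos, fun z hr ⟨θ, hθ₁, hθ₂, hz⟩ ↦ ?_⟩
  rw [hw z]
  change ‖faddeeva z‖ ≤ _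
  have hπ : 1 ≤ √π := Real.one_le_sqrt.mpr (by linarith [Real.pi_gt_three])
  have him : -(‖z‖ / 2) < z.im := by
    rw [im_eq_norm_mul_sin hz]
    nlinarith [neg_half_lt_sin (θ := θ) (by linarith [Real.pi_pos]) (by linarith [Real.pi_pos])]
  rcases le_or_gt (‖z‖ / 2) z.im with hy | hy
  · calc ‖faddeeva z‖ ≤ 1 / (√π * z.im) := norm_faddeeva_le_of_im_pos (by linarith)
      _ ≤ 6 / ‖z‖ := by
        rw [div_le_div_iff₀ (by nlinarith) (by linarith)]
        nlinarith
  · have hre := norm_sq_div_two_le_re_sq (abs_le.mpr ⟨him.le, hy.le⟩)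
    calc ‖faddeeva z‖ ≤ (1 + 2 * ‖z‖ / √π) / (z ^ 2).re :=
          norm_faddeeva_le_of_re_sq_pos (by nlinarith)
      _ ≤ (1 + 2 * ‖z‖) / (‖z‖ ^ 2 / 2) := by
        gcongr
        exact div_le_self (by positivity) hπ
      _ ≤ 6 / ‖z‖ := by
        rw [div_le_div_iff₀ (by positivity) (by linarith)]
        nlinarith
end

section
/- Let μ be a positive Borel measure on [0,∞) with μ([0,1]) < ∞ and ∫₁^∞ x⁻¹ μ(dx) < ∞, and let γ, λ, m, β > 0. Let Ω = {z ∈ ℂ : Re z ≤ 0, z ≠ 0}, let p(z) = ∫₀^∞ 1/(z − x) μ(dx) for z ∈ Ω, and define q₂(z) = γ − λ·z + m·z² + β·z·p(z). Then q₂ is analytic on Ω and q₂(z) ≠ 0 for every z ∈ Ω. -/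
/-!
For `z` off the ray `[0, ∞)` the kernel `(z - x)⁻¹` is bounded by a multiple of `(1 + x)⁻¹`,
locally uniformly in `z`, and `(1 + x)⁻¹` is `μ`-integrable on `[0, ∞)` by the two finiteness
assumptions on `μ`. Differentiating under the integral sign makes `p` holomorphic off the ray,
hence `q₂` analytic on `Ω`.

For nonvanishing, `Re (z - x)⁻¹ = (Re z - x) / |z - x|² ≤ 0` gives `Re p(z) ≤ 0` on the closed
left half-plane, and then
`Re (q₂(z) z̄) = γ Re z - λ |z|² + m |z|² Re z + β |z|² Re p(z) ≤ -λ |z|² < 0`.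
-/

open MeasureTheory Filter Set

/-- The punctured closed left half-plane `ℂ*∖{0} = {z : Re z ≤ 0, z ≠ 0}`. -/
def leftHalfPunctured : Set ℂ := {z : ℂ | z.re ≤ 0 ∧ z ≠ 0}

open Complex Metric Topology ComplexConjugate

noncomputable def cauchyTransform (μ : Measure ℝ) (z : ℂ) : ℂ :=
  ∫ x in Ici (0:ℝ), (z - x)⁻¹ ∂μ

lemma integrableOn_inv_one_add {μ : Measure ℝ} (hμ01 : μ (Icc 0 1) < ⊤)
    (hμint : IntegrableOn (fun x : ℝ => x⁻¹) (Ici 1) μ) :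
    IntegrableOn (fun x : ℝ => (1 + x)⁻¹) (Ici 0) μ := by
  have hmeas : ∀ s, AEStronglyMeasurable (fun x : ℝ => (1 + x)⁻¹) (μ.restrict s) := by
    intro s; fun_prop
  have hsmall : IntegrableOn (fun x : ℝ => (1 + x)⁻¹) (Icc 0 1) μ :=
    (integrableOn_const (C := (1:ℝ)) hμ01.ne).mono' (hmeas _) <|
      ae_restrict_of_forall_mem measurableSet_Icc fun x hx => by
        have hx : 0 ≤ x := hx.1
        rw [Real.norm_of_nonneg (by positivity)]
        exact inv_le_one_of_one_le₀ (by linarith)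
  have hlarge : IntegrableOn (fun x : ℝ => (1 + x)⁻¹) (Ici 1) μ :=
    hμint.mono' (hmeas _) <| ae_restrict_of_forall_mem measurableSet_Ici fun x hx => by
      have hx : (1:ℝ) ≤ x := hx
      rw [Real.norm_of_nonneg (by positivity)]
      exact inv_anti₀ (by linarith) (by linarith)
  exact (hsmall.union hlarge).mono_set fun x hx =>
    (le_total x 1).imp (fun h => ⟨hx, h⟩) id

lemma isClosed_ofReal_image_Ici : IsClosed (ofReal '' Ici (0:ℝ)) :=
  isometry_ofReal.isClosedEmbedding.isClosedMap _ isClosed_Ici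

lemma eventually_mul_one_add_le_norm_sub_ofReal {z₀ : ℂ} (hz₀ : z₀ ∉ ofReal '' Ici 0) :
    ∃ c > 0, ∀ᶠ w in 𝓝 z₀, ∀ x : ℝ, 0 ≤ x → c * (1 + x) ≤ ‖w - (x : ℂ)‖ := by
  set D := infDist z₀ (ofReal '' Ici 0) / 2 with hD_def
  have hD : 0 < D := half_pos <|
    (isClosed_ofReal_image_Ici.notMem_iff_infDist_pos ⟨0, 0, self_mem_Ici, ofReal_zero⟩).1 hz₀
  set K := ‖z₀‖ + D
  refine ⟨D / (D + K + 1), by positivity, eventually_of_mem (ball_mem_nhds z₀ hD) ?_⟩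
  intro w hw x hx
  rw [mem_ball, dist_eq_norm] at hw
  have hnear : D ≤ ‖w - (x : ℂ)‖ := by
    have h1 := infDist_le_infDist_add_dist (x := z₀) (y := w) (s := ofReal '' Ici 0)
    have h2 := infDist_le_dist_of_mem (x := w) (mem_image_of_mem ofReal (mem_Ici.2 hx))
    rw [dist_eq_norm] at h2
    rw [dist_comm, dist_eq_norm] at h1
    linarith
  have hfar : x - K ≤ ‖w - (x : ℂ)‖ := by
    have h1 := norm_sub_norm_le (x : ℂ) w
    have h2 := norm_le_of_mem_closedBall (mem_closedBall_iff_norm.2 hw.le)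
    rw [norm_sub_rev, Complex.norm_of_nonneg hx] at h1
    have h3 := norm_sub_norm_le w z₀
    linarith
  have hK : 0 ≤ K + 1 := by positivity
  -- `D * hfar + (K + 1) * hnear` is the inequality `D (1 + x) ≤ (D + K + 1) ‖w - x‖`.
  rw [div_mul_eq_mul_div, div_le_iff₀ (by positivity)]
  nlinarith [mul_le_mul_of_nonneg_left hfar hD.le, mul_le_mul_of_nonneg_left hnear hK]

lemma differentiableAt_cauchyTransform {μ : Measure ℝ}
    (hμ : IntegrableOn (fun x : ℝ => (1 + x)⁻¹) (Ici 0) μ) {z₀ : ℂ}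
    (hz₀ : z₀ ∉ ofReal '' Ici 0) : DifferentiableAt ℂ (cauchyTransform μ) z₀ := by
  obtain ⟨c, hc, hbound⟩ := eventually_mul_one_add_le_norm_sub_ofReal hz₀
  have hbound_inv : ∀ w, (∀ x : ℝ, 0 ≤ x → c * (1 + x) ≤ ‖w - (x : ℂ)‖) →
      ∀ x : ℝ, 0 ≤ x → ‖(w - (x : ℂ))⁻¹‖ ≤ c⁻¹ * (1 + x)⁻¹ :=
    fun w hw x hx => by
      rw [norm_inv, ← mul_inv]
      exact inv_anti₀ (by positivity) (hw x hx)
  have hne : ∀ w, (∀ x : ℝ, 0 ≤ x → c * (1 + x) ≤ ‖w - (x : ℂ)‖) →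
      ∀ x : ℝ, 0 ≤ x → w - (x : ℂ) ≠ 0 :=
    fun w hw x hx => norm_pos_iff.1 <| (by positivity : 0 < c * (1 + x)).trans_le (hw x hx)
  have hint : Integrable (fun x : ℝ => (z₀ - (x : ℂ))⁻¹) (μ.restrict (Ici 0)) :=
    (hμ.const_mul c⁻¹).mono' (by fun_prop) <|
      ae_restrict_of_forall_mem measurableSet_Ici (hbound_inv z₀ hbound.self_of_nhds)
  refine (hasDerivAt_integral_of_dominated_loc_of_deriv_le (μ := μ.restrict (Ici 0))
    (F := fun w (x : ℝ) => (w - (x : ℂ))⁻¹) (F' := fun w x => -1 / (w - (x : ℂ)) ^ 2)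
    (bound := fun x => c⁻¹ ^ 2 * (1 + x)⁻¹) hbound (.of_forall fun w => by fun_prop) hint
    (Measurable.aestronglyMeasurable (by fun_prop)) ?_ (hμ.const_mul _) ?_).2.differentiableAt
  · refine ae_restrict_of_forall_mem measurableSet_Ici fun x hx w hw => ?_
    have hx' : (0:ℝ) ≤ x := hx
    calc ‖-1 / (w - (x : ℂ)) ^ 2‖ = ‖(w - (x : ℂ))⁻¹‖ ^ 2 := by
          rw [neg_div, norm_neg, one_div, norm_inv, norm_inv, norm_pow, inv_pow]
      _ ≤ (c⁻¹ * (1 + x)⁻¹) ^ 2 := by gcongr; exact hbound_inv w hw x hx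
      _ = c⁻¹ ^ 2 * ((1 + x)⁻¹ * (1 + x)⁻¹) := by ring
      _ ≤ c⁻¹ ^ 2 * (1 + x)⁻¹ := by
          gcongr
          exact mul_le_of_le_one_left (by positivity) (inv_le_one_of_one_le₀ (by linarith))
  · exact ae_restrict_of_forall_mem measurableSet_Ici fun x hx w hw =>
      ((hasDerivAt_id w).sub_const (x : ℂ)).inv (hne w hw x hx)

lemma analyticOnNhd_cauchyTransform {μ : Measure ℝ}
    (hμ : IntegrableOn (fun x : ℝ => (1 + x)⁻¹) (Ici 0) μ) :
    AnalyticOnNhd ℂ (cauchyTransform μ) (ofReal '' Ici 0)ᶜ :=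
  DifferentiableOn.analyticOnNhd
    (fun _ hz => (differentiableAt_cauchyTransform hμ hz).differentiableWithinAt)
    isClosed_ofReal_image_Ici.isOpen_compl

lemma re_cauchyTransform_nonpos (μ : Measure ℝ) {z : ℂ} (hz : z.re ≤ 0) :
    (cauchyTransform μ z).re ≤ 0 := by
  by_cases hint : Integrable (fun x : ℝ => (z - x)⁻¹) (μ.restrict (Ici 0))
  · rw [cauchyTransform, ← RCLike.re_to_complex, ← integral_re hint]
    refine setIntegral_nonpos measurableSet_Ici fun x (hx : 0 ≤ x) => ?_
    rw [RCLike.re_to_complex, inv_re, sub_re, ofReal_re]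
    exact div_nonpos_of_nonpos_of_nonneg (by linarith) (normSq_nonneg _)
  · rw [cauchyTransform, integral_undef hint, zero_re]

lemma re_mul_conj_lt_zero {γ lam m β : ℝ} (hγ : 0 ≤ γ) (hlam : 0 < lam) (hm : 0 ≤ m)
    (hβ : 0 ≤ β) {z w : ℂ} (hz : z ≠ 0) (hzre : z.re ≤ 0) (hwre : w.re ≤ 0) :
    (((γ : ℂ) - lam * z + m * z ^ 2 + β * z * w) * conj z).re < 0 := by
  have hN : 0 < normSq z := normSq_pos.2 hz
  have hre : (((γ : ℂ) - lam * z + m * z ^ 2 + β * z * w) * conj z).re =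
      γ * z.re - lam * normSq z + m * normSq z * z.re + β * normSq z * w.re := by
    simp only [mul_re, mul_im, sub_re, sub_im, add_re, add_im, ofReal_re, ofReal_im, conj_re,
      conj_im, sq, normSq_apply]
    ring
  rw [hre]
  nlinarith [mul_nonpos_of_nonneg_of_nonpos hγ hzre,
    mul_nonpos_of_nonneg_of_nonpos (mul_nonneg hm hN.le) hzre,
    mul_nonpos_of_nonneg_of_nonpos (mul_nonneg hβ hN.le) hwre]

lemma leftHalfPunctured_subset_compl_ofReal_image_Ici :
    leftHalfPunctured ⊆ (ofReal '' Ici (0:ℝ))ᶜ := by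
  rintro z ⟨hre, hz⟩ ⟨x, hx, rfl⟩
  exact hz (by rw [ofReal_re] at hre; rw [le_antisymm hre hx, ofReal_zero])

/-- The function `q₂(z) = γ − λz + mz² + βz·p(z)`, with
`p(z) = ∫₀^∞ (z−x)⁻¹ μ(dx)`, is analytic and non-vanishing on the punctured
closed left half-plane. -/
theorem q2_analytic_nonvanishing_CM
    (μ : Measure ℝ) (γ lam m β : ℝ)
    (hγ : 0 < γ) (hlam : 0 < lam) (hm : 0 < m) (hβ : 0 < β)
    (hμ01 : μ (Icc (0:ℝ) 1) < ⊤)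
    (hμint : IntegrableOn (fun x : ℝ => x⁻¹) (Ici 1) μ)
    (p q₂ : ℂ → ℂ)
    (hp : ∀ z : ℂ, p z = ∫ x in Ici (0:ℝ), (z - (x : ℂ))⁻¹ ∂μ)
    (hq₂ : ∀ z : ℂ, q₂ z =
      (γ : ℂ) - (lam : ℂ) * z + (m : ℂ) * z ^ 2 + (β : ℂ) * z * p z) :
    (∀ z ∈ leftHalfPunctured, AnalyticAt ℂ q₂ z) ∧
    (∀ z ∈ leftHalfPunctured, q₂ z ≠ 0) := by
  have hp : p = cauchyTransform μ := funext hp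
  subst hp
  constructor
  · intro z hz
    have hpz := analyticOnNhd_cauchyTransform (integrableOn_inv_one_add hμ01 hμint) z
      (leftHalfPunctured_subset_compl_ofReal_image_Ici hz)
    rw [funext hq₂]
    fun_prop
  · intro z hz hq
    have := re_mul_conj_lt_zero hγ.le hlam hm.le hβ.le hz.2 hz.1
      (re_cauchyTransform_nonpos μ hz.1)
    rw [← hq₂, hq, zero_mul, zero_re] at this
    exact this.false
end
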